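/- arXiv:2210.09408 — 4 statements merged into one kernel-verified Lean document; each statement's English description precedes it below -/
import Mathlib

section
/- If G ≀ H does not have a surjective strategy and φ : G' → G is a surjective group homomorphism, then G' ≀ H does not have a surjective strategy. -/
/-- One step of multiplication in the wreath product `G ≀ H` (base `Ω → G`,
with `H` acting on `Ω`): `(k,h)·(k',h') = (k·(h·k'), hh')`. -/
def wmul {G H Ω : Type*} [Group G] [Group H] [MulAction H Ω]
    (a b : (Ω → G) × H) : (Ω → G) × H :=
  (a.1 * fun ω => b.1 (a.2⁻¹ • ω), a.2 * b.2)

/-- `ks` is a surjective strategy for `G ≀ H`: for every adversarial sequence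
`hs` of the same length, the projections to the base `K = Ω → G` of the partial
products `id, (k₁,h₁), (k₁,h₁)(k₂,h₂), …` cover all of `K`. -/
def IsSurjStrat (G : Type*) [Group G] (H : Type*) [Group H] (Ω : Type*) [MulAction H Ω]
    (ks : List (Ω → G)) : Prop :=
  ∀ hs : List H, hs.length = ks.length →
    ∀ k : Ω → G, k ∈ (((ks.zip hs).scanl wmul 1).map Prod.fst)

/-- The puzzle `G ≀ H` (switches `G` at positions `Ω`, spun by `H`) has a
surjective strategy. -/
def HasSurjStrat (G : Type*) [Group G] (H : Type*) [Group H] (Ω : Type*) [MulAction H Ω] : Prop :=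
  ∃ ks : List (Ω → G), IsSurjStrat G H Ω ks

/-!
A strategy `k₁, …, k_N` for `G' ≀ H` pushes forward along `φ` to the strategy `φ ∘ k₁, …, φ ∘ k_N`
for `G ≀ H`. Applying `φ` coordinatewise to the base is a homomorphism of wreath products, so the
partial products of the pushed-forward strategy against any `h₁, …, h_N` are the images of the
original ones; as these cover `K'` and `K' → K` is onto, they cover `K`.
-/

section PushForward

variable {G G' H Ω : Type*} [Group G] [Group G'] [Group H] [MulAction H Ω]

lemma wmul_map_comp (φ : G' →* G) (a b : (Ω → G') × H) :
    Prod.map (φ ∘ ·) id (wmul a b) = wmul (Prod.map (φ ∘ ·) id a) (Prod.map (φ ∘ ·) id b) := by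
  ext ω <;> simp [wmul]

lemma scanl_wmul_map_comp (φ : G' →* G) (l : List ((Ω → G') × H)) (a : (Ω → G') × H) :
    (l.scanl wmul a).map (Prod.map (φ ∘ ·) id) =
      (l.map (Prod.map (φ ∘ ·) id)).scanl wmul (Prod.map (φ ∘ ·) id a) := by
  induction l generalizing a with
  | nil => simp
  | cons b l ih => simp [List.scanl_cons, ih, wmul_map_comp φ a b]

lemma IsSurjStrat.map_comp {ks : List (Ω → G')} (hks : IsSurjStrat G' H Ω ks) (φ : G' →* G)
    (hφ : Function.Surjective φ) : IsSurjStrat G H Ω (ks.map (φ ∘ ·)) := by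
  intro hs hlen k
  obtain ⟨k', rfl⟩ := hφ.comp_left k
  have hone : Prod.map (φ ∘ ·) id (1 : (Ω → G') × H) = 1 := by ext <;> simp
  have hmem := List.mem_map_of_mem (f := (φ ∘ ·)) (hks hs (by simpa using hlen) k')
  rwa [List.map_map, ← Prod.map_fst' (φ ∘ ·) id, ← List.map_map, scanl_wmul_map_comp,
    hone, ← List.zip_map_left] at hmem

lemma HasSurjStrat.of_surjective (φ : G' →* G) (hφ : Function.Surjective φ)
    (h : HasSurjStrat G' H Ω) : HasSurjStrat G H Ω :=
  let ⟨ks, hks⟩ := h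
  ⟨ks.map (φ ∘ ·), hks.map_comp φ hφ⟩

end PushForward

theorem stmt1_general {G G' H Ω : Type*} [Group G] [Group G'] [Group H] [MulAction H Ω]
    (φ : G' →* G) (hφ : Function.Surjective φ)
    (h : ¬ HasSurjStrat G H Ω) : ¬ HasSurjStrat G' H Ω :=
  fun h' => h (h'.of_surjective φ hφ)

/-- reduction on switches via a surjective homomorphism φ : G' → G. -/
theorem stmt1 {G G' H Ω : Type*} [Group G] [Group G'] [Group H] [MulAction H Ω]
    [Fintype Ω] [Finite G] [Finite G'] [Finite H] [FaithfulSMul H Ω]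
    (φ : G' →* G) (hφ : Function.Surjective φ)
    (h : ¬ HasSurjStrat G H Ω) : ¬ HasSurjStrat G' H Ω :=
  stmt1_general φ hφ h
end

section
/- Let φ : H ↪ H' be an embedding of groups acting on a set Ω, and let Orb(ω) be the orbit of ω ∈ Ω under the image of φ. If G ≀_{Orb(ω)} H has no surjective strategy, then G ≀_Ω H' has no surjective strategy. -/
/-!
Restricting the base along an injective map `f : α → Ω` that intertwines the action of `H`
on `α` with the action of `H'` on `Ω` through `φ : H →* H'` is compatible with the
wreath multiplication. Hence every adversarial sequence against the restricted strategy
lifts through `φ` to one against the original strategy, whose partial products restrict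
to the partial products of the restricted game; since every `k : α → G` extends to `Ω`,
surjectivity passes to the restriction. The theorem is the case `f = (↑) : orbit H ω → Ω`.
-/

section Restriction

variable {G H H' α Ω : Type*} [Group G] [Group H] [Group H'] [MulAction H α] [MulAction H' Ω]
  {φ : H →* H'} {f : α → Ω}

theorem wmul_comp_of_map_smul (hf : ∀ (h : H) (a : α), f (h • a) = φ h • f a)
    (k k' : Ω → G) (h h' : H) :
    wmul (k ∘ f, h) (k' ∘ f, h') = ((wmul (k, φ h) (k', φ h')).1 ∘ f, h * h') := by
  ext a
  · simp [wmul, hf, map_inv]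
  · rfl

theorem scanl_wmul_comp_of_map_smul (hf : ∀ (h : H) (a : α), f (h • a) = φ h • f a) :
    ∀ (ks : List (Ω → G)) (hs : List H) (k : Ω → G) (h : H),
      (((ks.map (· ∘ f)).zip hs).scanl wmul (k ∘ f, h)).map Prod.fst
        = (((ks.zip (hs.map φ)).scanl wmul (k, φ h)).map Prod.fst).map (· ∘ f)
  | [], _, _, _ => by simp
  | _ :: _, [], _, _ => by simp
  | k' :: ks, h' :: hs, k, h => by
    simp only [List.map_cons, List.zip_cons_cons, List.scanl_cons, wmul_comp_of_map_smul hf,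
      scanl_wmul_comp_of_map_smul hf ks hs, map_mul]
    rfl

theorem IsSurjStrat.comp_of_injective (hinj : Function.Injective f)
    (hf : ∀ (h : H) (a : α), f (h • a) = φ h • f a) {ks : List (Ω → G)}
    (hks : IsSurjStrat G H' Ω ks) : IsSurjStrat G H α (ks.map (· ∘ f)) := by
  intro hs hlen k
  have hmem := hks (hs.map φ) (by simpa using hlen) (Function.extend f k 1)
  have hscan := scanl_wmul_comp_of_map_smul hf ks hs 1 1
  rw [map_one] at hscan
  change k ∈ (((ks.map (· ∘ f)).zip hs).scanl wmul ((1 : Ω → G) ∘ f, 1)).map Prod.fst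
  rw [hscan, ← Function.extend_comp hinj k 1]
  exact List.mem_map_of_mem hmem

theorem HasSurjStrat.of_injective (hinj : Function.Injective f)
    (hf : ∀ (h : H) (a : α), f (h • a) = φ h • f a) (h : HasSurjStrat G H' Ω) :
    HasSurjStrat G H α :=
  let ⟨_, hks⟩ := h
  ⟨_, hks.comp_of_injective hinj hf⟩

end Restriction

theorem stmt3_general {G H H' Ω : Type*} [Group G] [Group H] [Group H'] [MulAction H' Ω]
    [MulAction H Ω]
    (φ : H →* H')
    (hcomp : ∀ (h : H) (x : Ω), h • x = φ h • x)
    (ω : Ω)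
    (horb : ¬ HasSurjStrat G H (MulAction.orbit H ω)) :
    ¬ HasSurjStrat G H' Ω :=
  fun h => horb (h.of_injective Subtype.val_injective fun g x => hcomp g x)

/-- reduction on spinning via orbits. H acts on Ω through the
embedding φ : H ↪ H'; if the puzzle on the orbit of ω has no surjective
strategy, neither does G ≀_Ω H'. -/
theorem stmt3 {G H H' Ω : Type*} [Group G] [Group H] [Group H'] [MulAction H' Ω]
    [MulAction H Ω] [Fintype Ω] [Finite G] [Finite H] [Finite H'] [FaithfulSMul H' Ω]
    (φ : H →* H') (hφ : Function.Injective φ)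
    (hcomp : ∀ (h : H) (x : Ω), h • x = φ h • x)
    (ω : Ω)
    (horb : ¬ HasSurjStrat G H (MulAction.orbit H ω)) :
    ¬ HasSurjStrat G H' Ω :=
  stmt3_general φ hcomp ω horb
end

section
/- If N is a normal subgroup of G such that both N ≀ H and (G/N) ≀ H have surjective strategies, then G ≀ H has a surjective strategy. -/
/-! Play the strategy for `N` (embedded in `G`), then a lift of the first move of the strategy
for `G/N`, then the strategy for `N` again, and so on. Projected to `(G/N) ≀ H`, an `N`-block only
spins, so the projected states at the starts of the blocks are the partial products of the
quotient strategy against the adversary that merges each lifted move's spin with the spins of the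
following block; hence they meet every coset of `N^Ω`. A surjective strategy works from any
starting state, so within the block starting in a given coset the `N`-strategy reaches every
element of that coset. -/

theorem List.scanl_hom {α₁ α₂ β : Type*} (f : α₁ → α₂) {g₁ : α₁ → β → α₁} {g₂ : α₂ → β → α₂}
    (l : List β) (init : α₁) (H : ∀ x y, g₂ (f x) y = f (g₁ x y)) :
    l.scanl g₂ (f init) = (l.scanl g₁ init).map f := by
  induction l generalizing init with
  | nil => rfl
  | cons a l ih => simp only [List.scanl_cons, List.map_cons, H, ih]

theorem List.scanl_append_cons {α β : Type*} (f : β → α → β) (b : β) (l₁ l₂ : List α) (a : α) :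
    (l₁ ++ a :: l₂).scanl f b = l₁.scanl f b ++ l₂.scanl f (f (l₁.foldl f b) a) := by
  rw [List.scanl_append, List.scanl_cons, List.tail_cons]

section Wreath

variable {H Ω : Type*} [Group H] [MulAction H Ω] {A B : Type*} [Group A] [Group B]

theorem wmul_assoc (a b c : (Ω → A) × H) : wmul (wmul a b) c = wmul a (wmul b c) := by
  ext ω <;> simp [wmul, mul_assoc, mul_smul]

theorem wmul_one (a : (Ω → A) × H) : wmul a 1 = a := by
  ext ω <;> simp [wmul]

theorem wmul_one_mk (a : (Ω → A) × H) (h : H) : wmul a (1, h) = (a.1, a.2 * h) := by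
  ext ω <;> simp [wmul]

def baseMap (f : A →* B) (x : (Ω → A) × H) : (Ω → B) × H :=
  (f ∘ x.1, x.2)

theorem baseMap_wmul (f : A →* B) (a b : (Ω → A) × H) :
    baseMap f (wmul a b) = wmul (baseMap f a) (baseMap f b) := by
  ext ω <;> simp [baseMap, wmul]

theorem scanl_map_baseMap (f : A →* B) (l : List ((Ω → A) × H)) (P : (Ω → A) × H) :
    (l.map (baseMap f)).scanl wmul (baseMap f P) = (l.scanl wmul P).map (baseMap f) := by
  rw [List.scanl_map]
  exact List.scanl_hom _ _ _ fun x y => (baseMap_wmul f x y).symm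

theorem foldl_map_baseMap (f : A →* B) (l : List ((Ω → A) × H)) (P : (Ω → A) × H) :
    (l.map (baseMap f)).foldl wmul (baseMap f P) = baseMap f (l.foldl wmul P) := by
  rw [List.foldl_map]
  exact List.foldl_hom _ fun x y => (baseMap_wmul f x y).symm

theorem foldl_wmul_of_fst_eq_one (l : List ((Ω → A) × H)) (hl : ∀ x ∈ l, x.1 = 1)
    (P : (Ω → A) × H) : l.foldl wmul P = (P.1, P.2 * (l.map Prod.snd).prod) := by
  induction l generalizing P with
  | nil => simp
  | cons x l ih =>
    obtain ⟨x₁, x₂⟩ := x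
    obtain rfl : x₁ = 1 := hl _ List.mem_cons_self
    rw [List.foldl_cons, wmul_one_mk, ih fun y hy => hl y (List.mem_cons_of_mem _ hy)]
    simp [mul_assoc]

theorem IsSurjStrat.mem_scanl {ks : List (Ω → A)} (hks : IsSurjStrat A H Ω ks)
    (P : (Ω → A) × H) (hs : List H) (hlen : hs.length = ks.length) (k : Ω → A) :
    k ∈ ((ks.zip hs).scanl wmul P).map Prod.fst := by
  obtain ⟨x, hx, hx₁⟩ := List.mem_map.1 <|
    hks hs hlen fun ω => (P.1 (P.2 • ω))⁻¹ * k (P.2 • ω)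
  rw [← wmul_one P, List.scanl_hom (wmul P) _ _ fun x y => wmul_assoc P x y, List.map_map]
  refine List.mem_map.2 ⟨x, hx, funext fun ω => ?_⟩
  simp [wmul, hx₁]

end Wreath

theorem List.exists_eq_append_cons_of_length_eq {α : Type*} {l : List α} {m n : ℕ}
    (hl : l.length = m + (n + 1)) :
    ∃ l₁ a l₂, l = l₁ ++ a :: l₂ ∧ l₁.length = m ∧ l₂.length = n :=
  ⟨l.take m, l[m], l.drop (m + 1),
    by rw [← List.drop_eq_getElem_cons, List.take_append_drop], by simp; omega, by simp; omega⟩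

def interleave {α : Type*} (B : List α) : List α → List α
  | [] => B
  | q :: t => B ++ q :: interleave B t

section Quotient

variable {G H Ω : Type*} [Group G]

theorem baseMap_mk_out (N : Subgroup G) [N.Normal] (q : Ω → G ⧸ N) (h : H) :
    baseMap (QuotientGroup.mk' N) (Quotient.out ∘ q, h) = (q, h) := by
  ext ω <;> simp [baseMap]

variable [Group H] [MulAction H Ω]

theorem IsSurjStrat.mem_scanl_of_mem_coset {N : Subgroup G} {ns : List (Ω → N)}
    (hns : IsSurjStrat N H Ω ns) (P : (Ω → G) × H) (hs : List H) (hlen : hs.length = ns.length)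
    (k : Ω → G) (hk : ∀ ω, (P.1 ω)⁻¹ * k ω ∈ N) :
    k ∈ (((ns.map (N.subtype ∘ ·)).zip hs).scanl wmul P).map Prod.fst := by
  have hP : P = wmul (P.1, 1) (baseMap N.subtype (1, P.2)) := by
    ext ω <;> simp [wmul, baseMap]
  obtain ⟨x, hx, hx₁⟩ := List.mem_map.1 <|
    hns.mem_scanl (1, P.2) hs hlen fun ω => ⟨(P.1 ω)⁻¹ * k ω, hk ω⟩
  have hzip : (ns.map (N.subtype ∘ ·)).zip hs = (ns.zip hs).map (baseMap N.subtype) :=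
    List.zip_map_left
  rw [hP, hzip, List.scanl_hom (wmul _) _ _ fun x y => wmul_assoc _ x y, scanl_map_baseMap,
    List.map_map, List.map_map]
  refine List.mem_map.2 ⟨x, hx, funext fun ω => ?_⟩
  simp [wmul, baseMap, hx₁]

theorem baseMap_mk_foldl_zip (N : Subgroup G) [N.Normal] (ns : List (Ω → N)) (hs : List H)
    (hlen : hs.length ≤ ns.length) (P : (Ω → G) × H) :
    baseMap (QuotientGroup.mk' N) (((ns.map (N.subtype ∘ ·)).zip hs).foldl wmul P) =
      (QuotientGroup.mk' N ∘ P.1, P.2 * hs.prod) := by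
  rw [← foldl_map_baseMap, foldl_wmul_of_fst_eq_one, List.map_map]
  · congr 2
    exact congrArg List.prod (List.map_snd_zip (by simpa using hlen))
  · simp only [List.mem_map]
    rintro _ ⟨x, hx, rfl⟩
    obtain ⟨n, -, hn⟩ := List.mem_map.1 (List.of_mem_zip hx).1
    ext ω
    simp [baseMap, ← hn]

theorem IsSurjStrat.exists_quotient_adversary {N : Subgroup G} [N.Normal] {ns : List (Ω → N)}
    (hns : IsSurjStrat N H Ω ns) (qs : List (Ω → G ⧸ N)) (hs : List H)
    (hlen : hs.length = (interleave (ns.map (N.subtype ∘ ·)) (qs.map (Quotient.out ∘ ·))).length) :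
    ∃ hq : List H, hq.length = qs.length ∧ ∀ (P : (Ω → G) × H) (k : Ω → G),
      QuotientGroup.mk' N ∘ k ∈ ((qs.zip hq).scanl wmul
          (QuotientGroup.mk' N ∘ P.1, P.2 * (hs.take ns.length).prod)).map Prod.fst →
      k ∈ (((interleave (ns.map (N.subtype ∘ ·)) (qs.map (Quotient.out ∘ ·))).zip hs).scanl
          wmul P).map Prod.fst := by
  set B := ns.map (N.subtype ∘ ·)
  have hBlen : B.length = ns.length := List.length_map _
  induction qs generalizing hs with
  | nil =>
    refine ⟨[], rfl, fun P k hk =>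
      hns.mem_scanl_of_mem_coset P hs (hlen.trans hBlen) k fun ω => ?_⟩
    simp only [List.zip_nil_left, List.scanl_nil, List.map_cons, List.map_nil,
      List.mem_singleton] at hk
    exact QuotientGroup.eq.1 (congrFun hk ω).symm
  | cons q qs ih =>
    obtain ⟨hB, h, hs', rfl, hB_len, hs'_len⟩ :=
      List.exists_eq_append_cons_of_length_eq (by simpa [interleave, hBlen] using hlen)
    obtain ⟨hq, hq_len, hcover⟩ := ih hs' hs'_len
    set A := (hs'.take ns.length).prod
    refine ⟨(h * A) :: hq, by simp [hq_len], fun P k hk => ?_⟩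
    rw [List.take_left' hB_len, List.zip_cons_cons, List.scanl_cons, List.map_cons,
      List.mem_cons] at hk
    have hzip : (interleave B ((q :: qs).map (Quotient.out ∘ ·))).zip (hB ++ h :: hs') =
        B.zip hB ++ (Quotient.out ∘ q, h) :: (interleave B (qs.map (Quotient.out ∘ ·))).zip hs' :=
      List.zip_append (by rw [hBlen, hB_len])
    rw [hzip, List.scanl_append_cons, List.map_append, List.mem_append]
    rcases hk with hk | hk
    · exact .inl <| hns.mem_scanl_of_mem_coset P hB hB_len k fun ω =>
        QuotientGroup.eq.1 (congrFun hk ω).symm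
    · set P' := wmul ((B.zip hB).foldl wmul P) (Quotient.out ∘ q, h)
      have hstate : (QuotientGroup.mk' N ∘ P'.1, P'.2 * A) =
          wmul (QuotientGroup.mk' N ∘ P.1, P.2 * hB.prod) (q, h * A) := calc
        _ = wmul (baseMap (QuotientGroup.mk' N) P') (1, A) := (wmul_one_mk (baseMap _ _) A).symm
        _ = wmul (wmul (QuotientGroup.mk' N ∘ P.1, P.2 * hB.prod) (q, h)) (1, A) := by
          rw [baseMap_wmul, baseMap_mk_foldl_zip N ns hB hB_len.le, baseMap_mk_out]
        _ = _ := by rw [wmul_assoc, wmul_one_mk]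
      exact .inr <| hcover P' k (hstate ▸ hk)

end Quotient

theorem stmt4_general {G H Ω : Type*} [Group G] [Group H] [MulAction H Ω]
    (N : Subgroup G) [N.Normal]
    (h1 : HasSurjStrat N H Ω) (h2 : HasSurjStrat (G ⧸ N) H Ω) :
    HasSurjStrat G H Ω := by
  obtain ⟨ns, hns⟩ := h1
  obtain ⟨qs, hqs⟩ := h2
  refine ⟨interleave (ns.map (N.subtype ∘ ·)) (qs.map (Quotient.out ∘ ·)), fun hs hlen k => ?_⟩
  obtain ⟨hq, hq_len, hcover⟩ := hns.exists_quotient_adversary qs hs hlen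
  exact hcover 1 k (hqs.mem_scanl _ hq hq_len _)

/-- strategy decomposition via a normal subgroup N ⊴ G. -/
theorem stmt4 {G H Ω : Type*} [Group G] [Group H] [MulAction H Ω]
    [Fintype Ω] [Finite G] [Finite H] [FaithfulSMul H Ω]
    (N : Subgroup G) [N.Normal]
    (h1 : HasSurjStrat N H Ω) (h2 : HasSurjStrat (G ⧸ N) H Ω) :
    HasSurjStrat G H Ω :=
  stmt4_general N h1 h2
end

section
/- If G and H are finite p-groups for the same prime p, with H acting faithfully on a finite set Ω, then the wreath product G ≀_Ω H has a surjective strategy. -/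
theorem exists_list_surjective_prod_take (G : Type*) [Group G] [Finite G] :
    ∃ bs : List G, ∀ g, ∃ i, (bs.take i).prod = g := by
  have key : ∀ (xs : List G) (c : G),
      ∃ bs : List G, ∀ x ∈ xs, ∃ i, c * (bs.take i).prod = x := by
    intro xs
    induction xs with
    | nil => exact fun _ => ⟨[], by simp⟩
    | cons x xs ih =>
      intro c
      obtain ⟨bs, hbs⟩ := ih x
      refine ⟨(c⁻¹ * x) :: bs, fun y hy => ?_⟩
      rcases List.mem_cons.mp hy with rfl | hy
      · exact ⟨1, by simp⟩
      · obtain ⟨i, hi⟩ := hbs y hy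
        exact ⟨i + 1, by simpa [mul_assoc] using hi⟩
  have := Fintype.ofFinite G
  obtain ⟨bs, hbs⟩ := key Finset.univ.toList 1
  exact ⟨bs, fun g => by simpa using hbs g (by simp)⟩

theorem IsPGroup.exists_ne_one_mem_center_forall_apply_eq {K H : Type*} [Group K] [Group H]
    {p : ℕ} [Fact p.Prime] [Finite K] [Nontrivial K] (hK : IsPGroup p K) (hH : IsPGroup p H)
    (φ : H →* MulAut K) :
    ∃ z ∈ Subgroup.center K, z ≠ 1 ∧ ∀ h, φ h z = z := by
  let _ : MulAction H K := MulAction.compHom K φ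
  let C : SubMulAction H K :=
    { carrier := Subgroup.center K
      smul_mem' := fun h _ hz => MulEquivClass.apply_mem_center (φ h) hz }
  have hdvd : p ∣ Nat.card C := by
    have := hK.center_nontrivial
    obtain ⟨n, hn, hcard⟩ := ((hK.to_subgroup _).nontrivial_iff_card).mp this
    exact hcard ▸ dvd_pow_self p hn.ne'
  obtain ⟨⟨z, hzC⟩, hz, hne⟩ := hH.exists_fixed_point_of_prime_dvd_card_of_fixed_point C hdvd
    (a := ⟨1, Subgroup.one_mem _⟩) fun h => Subtype.ext (map_one (φ h))
  exact ⟨z, hzC, fun h1 => hne (Subtype.ext h1.symm), fun h => congrArg Subtype.val (hz h)⟩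

theorem Subgroup.card_quotient_lt {K : Type*} [Group K] [Finite K] {N : Subgroup K}
    (hN : N ≠ ⊥) : Nat.card (K ⧸ N) < Nat.card K := by
  rw [N.card_eq_card_quotient_mul_card_subgroup]
  exact lt_mul_of_one_lt_right Nat.card_pos (N.one_lt_card_iff_ne_bot.mpr hN)

open SemidirectProduct

namespace SurjStrategy

variable {K H : Type*} [Group K] [Group H]

/-- The adversary is an infinite stream, of which a play only reads as many entries as there are
moves; this avoids matching list lengths when strategies are concatenated. -/
def play (φ : H →* MulAut K) : List K → Stream' H → K ⋊[φ] H
  | [], _ => 1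
  | k :: ks, a => ⟨k, a.head⟩ * play φ ks a.tail

def IsCovering (φ : H →* MulAut K) (ks : List K) : Prop :=
  ∀ (a : Stream' H) (k : K), ∃ m, (play φ (ks.take m) a).left = k

variable {φ : H →* MulAut K}

@[simp] lemma play_nil (a : Stream' H) : play φ [] a = 1 := rfl

@[simp] lemma play_cons (k : K) (ks : List K) (a : Stream' H) :
    play φ (k :: ks) a = ⟨k, a.head⟩ * play φ ks a.tail := rfl

lemma play_append (l₁ l₂ : List K) (a : Stream' H) :
    play φ (l₁ ++ l₂) a = play φ l₁ a * play φ l₂ (a.drop l₁.length) := by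
  induction l₁ generalizing a with
  | nil => simp
  | cons k l ih => simp [ih, mul_assoc]

lemma IsCovering.exists_left_mul_play_eq {ks : List K} (hks : IsCovering φ ks)
    (x : K ⋊[φ] H) (a : Stream' H) (k : K) : ∃ m, (x * play φ (ks.take m) a).left = k := by
  obtain ⟨m, hm⟩ := hks a ((φ x.right)⁻¹ (x.left⁻¹ * k))
  refine ⟨m, ?_⟩
  rw [mul_left, hm, ← MulAut.mul_apply, mul_inv_cancel, MulAut.one_apply, mul_inv_cancel_left]

lemma map_eq_self_of_forall_apply_eq {N : Subgroup K} (hN : ∀ h, ∀ x ∈ N, φ h x = x)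
    (h : H) : N.map (φ h : K →* K) = N := by
  ext y
  exact ⟨fun ⟨x, hx, hxy⟩ => hxy ▸ (hN h x hx).symm ▸ hx, fun hy => ⟨y, hy, hN h y hy⟩⟩

section Quotient

variable (φ) (N : Subgroup K) [N.Normal]

def quotientAction (hN : ∀ h, N.map (φ h : K →* K) = N) : H →* MulAut (K ⧸ N) where
  toFun h := QuotientGroup.congr N N (φ h) (hN h)
  map_one' := by
    ext q
    induction q using QuotientGroup.induction_on
    simp
  map_mul' g h := by
    ext q
    induction q using QuotientGroup.induction_on
    rw [MulAut.mul_apply, QuotientGroup.congr_mk, QuotientGroup.congr_mk,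
      QuotientGroup.congr_mk, map_mul, MulAut.mul_apply]

def quotientMap (hN : ∀ h, N.map (φ h : K →* K) = N) :
    K ⋊[φ] H →* (K ⧸ N) ⋊[quotientAction φ N hN] H :=
  map (QuotientGroup.mk' N) (MonoidHom.id H) fun _ => by ext; rfl

lemma quotientMap_play (hN : ∀ h, N.map (φ h : K →* K) = N) (ks : List K) (a : Stream' H) :
    quotientMap φ N hN (play φ ks a) = play (quotientAction φ N hN) (ks.map (↑)) a := by
  induction ks generalizing a with
  | nil => simp
  | cons k ks ih => rw [play_cons, map_mul, ih]; rfl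

end Quotient

lemma play_left_of_forall_mem {N : Subgroup K} (hN : ∀ h, ∀ x ∈ N, φ h x = x) {bs : List K}
    (hbs : ∀ b ∈ bs, b ∈ N) (a : Stream' H) : (play φ bs a).left = bs.prod := by
  induction bs generalizing a with
  | nil => rfl
  | cons b bs ih =>
    have hbs' : ∀ b ∈ bs, b ∈ N := fun b hb => hbs b (List.mem_cons_of_mem _ hb)
    rw [play_cons, mul_left, ih hbs', hN _ _ (N.list_prod_mem hbs'), List.prod_cons]

lemma exists_left_mul_play_append_eq {N : Subgroup K} (hN : ∀ h, ∀ x ∈ N, φ h x = x)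
    {bs : List K} (hbsN : ∀ b ∈ bs, b ∈ N)
    (hbs : ∀ n ∈ N, ∃ i, (bs.take i).prod = n) (x : K ⋊[φ] H) (l : List K) (a : Stream' H)
    {k : K} (hk : (x.left : K ⧸ N) = k) :
    ∃ i, (x * play φ ((bs ++ l).take i) a).left = k := by
  obtain ⟨i, hi⟩ := hbs _ (QuotientGroup.eq.mp hk)
  refine ⟨min i bs.length, ?_⟩
  rw [List.take_append_of_le_length (min_le_right _ _), ← List.take_eq_take_min, mul_left,
    play_left_of_forall_mem hN fun b hb => hbsN b (List.mem_of_mem_take hb), hi,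
    hN _ _ (QuotientGroup.eq.mp hk), mul_inv_cancel_left]

def interleave (bs : List K) : List K → List K
  | [] => bs
  | c :: cs => bs ++ c :: interleave bs cs

section Interleave

variable {N : Subgroup K} [N.Normal]

lemma mk_left_mul_mul_eq (hN : ∀ h, ∀ x ∈ N, φ h x = x) (x y z : K ⋊[φ] H)
    (hy : y.left ∈ N) : ((x * y * z).left : K ⧸ N) = (x * inr y.right * z).left := by
  let π := quotientMap φ N (map_eq_self_of_forall_apply_eq hN)
  have hy' : π y = π (inr y.right) :=
    SemidirectProduct.ext ((QuotientGroup.eq_one_iff _).mpr hy) rfl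
  change (π (x * y * z)).left = (π (x * inr y.right * z)).left
  rw [map_mul, map_mul, hy', ← map_mul, ← map_mul]

lemma mk_left_mul_eq (hN : ∀ h, ∀ x ∈ N, φ h x = x) (x y : K ⋊[φ] H) (hy : y.left ∈ N) :
    ((x * y).left : K ⧸ N) = x.left := by
  simpa using mk_left_mul_mul_eq hN x y 1 hy

lemma exists_left_mul_play_interleave_eq (hN : ∀ h, ∀ x ∈ N, φ h x = x)
    {bs : List K} (hbsN : ∀ b ∈ bs, b ∈ N) (hbs : ∀ n ∈ N, ∃ i, (bs.take i).prod = n)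
    (cs : List K) (x : K ⋊[φ] H) (a : Stream' H) (k : K)
    (hcs : ∀ a' : Stream' H, ∃ m, ((x * play φ bs a * play φ (cs.take m) a').left : K ⧸ N) = k) :
    ∃ n, (x * play φ ((interleave bs cs).take n) a).left = k := by
  have hB : ∀ a, (play φ bs a).left ∈ N := fun a => by
    rw [play_left_of_forall_mem hN hbsN]; exact N.list_prod_mem hbsN
  induction cs generalizing x a with
  | nil =>
    obtain ⟨m, hm⟩ := hcs a
    rw [List.take_nil, play_nil, mul_one, mk_left_mul_eq hN _ _ (hB a)] at hm
    simpa [interleave] using exists_left_mul_play_append_eq hN hbsN hbs x [] a hm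
  | cons c cs ih =>
    by_cases hx : (x.left : K ⧸ N) = k
    · exact exists_left_mul_play_append_eq hN hbsN hbs x _ a hx
    -- Modulo `N` the block played after `c` is the pure `H`-move `q`; fold it into the adversary.
    set r := bs.length
    set q := (play φ bs (a.drop (r + 1))).right
    obtain ⟨n, hn⟩ := ih (x * play φ bs a * ⟨c, a.get r⟩) (a.drop (r + 1)) fun a' => by
      obtain ⟨m, hm⟩ := hcs (Stream'.cons (a.get r * q) a')
      cases m with
      | zero =>
        rw [List.take_zero, play_nil, mul_one, mk_left_mul_eq hN _ _ (hB a)] at hm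
        exact absurd hm hx
      | succ m =>
        have hcq : (⟨c, a.get r⟩ : K ⋊[φ] H) * inr q = ⟨c, a.get r * q⟩ :=
          SemidirectProduct.ext (by simp) rfl
        refine ⟨m, ?_⟩
        rw [mk_left_mul_mul_eq hN _ _ _ (hB _), mul_assoc (x * _), hcq, ← hm,
          List.take_succ_cons, play_cons, Stream'.head_cons, Stream'.tail_cons, ← mul_assoc]
    refine ⟨r + 1 + n, ?_⟩
    rw [interleave, List.take_append, List.take_of_length_le (by omega),
      show r + 1 + n - r = n + 1 by omega, List.take_succ_cons, play_append, play_cons,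
      Stream'.head_drop, Stream'.tail_drop, ← Stream'.drop_succ, ← mul_assoc, ← mul_assoc]
    exact hn

theorem IsCovering.interleave (hN : ∀ h, ∀ x ∈ N, φ h x = x) {bs : List K}
    (hbsN : ∀ b ∈ bs, b ∈ N) (hbs : ∀ n ∈ N, ∃ i, (bs.take i).prod = n) {cs : List K}
    (hcs : IsCovering (quotientAction φ N (map_eq_self_of_forall_apply_eq hN)) (cs.map (↑))) :
    IsCovering φ (interleave bs cs) := by
  intro a k
  have hB : (play φ bs a).left ∈ N := by
    rw [play_left_of_forall_mem hN hbsN]; exact N.list_prod_mem hbsN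
  simpa using exists_left_mul_play_interleave_eq hN hbsN hbs cs 1 a k fun a' => by
    obtain ⟨m, hm⟩ := hcs.exists_left_mul_play_eq (inr (play φ bs a).right) a' k
    refine ⟨m, ?_⟩
    rw [mk_left_mul_mul_eq hN _ _ _ hB, one_mul, ← hm, ← List.map_take, ← quotientMap_play]
    rfl

end Interleave

theorem exists_isCovering {p : ℕ} [Fact p.Prime] (hH : IsPGroup p H) (K : Type*) [Group K]
    [Finite K] (hK : IsPGroup p K) (φ : H →* MulAut K) : ∃ ks, IsCovering φ ks := by
  induction hcard : Nat.card K using Nat.strong_induction_on generalizing K with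
  | _ n ih =>
  rcases subsingleton_or_nontrivial K with hK1 | hK1
  · exact ⟨[], fun _ _ => ⟨0, Subsingleton.elim _ _⟩⟩
  obtain ⟨z, hzC, hz1, hzφ⟩ := hK.exists_ne_one_mem_center_forall_apply_eq hH φ
  set N := Subgroup.zpowers z
  have hN : ∀ h, ∀ x ∈ N, φ h x = x := by
    rintro h _ ⟨m, rfl⟩
    simp [map_zpow, hzφ]
  have : N.Normal := ⟨fun x hx g => by
    rwa [Subgroup.mem_center_iff.mp (Subgroup.zpowers_le.mpr hzC hx) g, mul_inv_cancel_right]⟩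
  obtain ⟨qs, hqs⟩ := ih _ (hcard ▸ Subgroup.card_quotient_lt (by simpa [N] using hz1))
    (K ⧸ N) (hK.to_quotient N) (quotientAction φ N (map_eq_self_of_forall_apply_eq hN)) rfl
  obtain ⟨bs, hbs⟩ := exists_list_surjective_prod_take N
  have hqs' : IsCovering (quotientAction φ N (map_eq_self_of_forall_apply_eq hN))
      ((qs.map Quotient.out).map (↑)) := by
    rwa [List.map_map, show (QuotientGroup.mk ∘ Quotient.out : K ⧸ N → K ⧸ N) = id from
      funext QuotientGroup.out_eq', List.map_id]
  refine ⟨interleave (bs.map (↑)) (qs.map Quotient.out), hqs'.interleave hN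
    (by simp +contextual) ?_⟩
  intro x hx
  obtain ⟨i, hi⟩ := hbs ⟨x, hx⟩
  exact ⟨i, by rw [← List.map_take, ← N.coe_subtype, ← map_list_prod, hi, N.coe_subtype]⟩

variable {G Ω : Type*} [Group G] [MulAction H Ω]

lemma foldl_wmul_zip_take {ks : List (Ω → G)} {hs : List H} (hlen : ks.length ≤ hs.length)
    (x : (Ω → G) × H) (n : ℕ) :
    (⟨(((ks.zip hs).take n).foldl wmul x).1, (((ks.zip hs).take n).foldl wmul x).2⟩ :
      (Ω → G) ⋊[mulAutArrow] H) =
      ⟨x.1, x.2⟩ * play mulAutArrow (ks.take n) (hs ++ₛ .const 1) := by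
  induction ks generalizing hs x n with
  | nil => simp
  | cons k ks ih =>
    obtain _ | ⟨h, hs⟩ := hs
    · simp at hlen
    obtain _ | n := n
    · simp
    rw [List.zip_cons_cons, List.take_succ_cons, List.foldl_cons,
      ih (Nat.le_of_succ_le_succ hlen), List.take_succ_cons, Stream'.cons_append_stream,
      play_cons, Stream'.head_cons, Stream'.tail_cons, ← mul_assoc]
    rfl

theorem IsCovering.isSurjStrat {ks : List (Ω → G)}
    (hks : IsCovering (mulAutArrow (G := H)) ks) : IsSurjStrat G H Ω ks := by
  intro hs hlen k
  obtain ⟨m, hm⟩ := hks (hs ++ₛ .const 1) k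
  rw [List.take_eq_take_min] at hm
  have hlt : min m ks.length < ((ks.zip hs).scanl wmul 1).length := by
    simp only [List.length_scanl, List.length_zip]; omega
  refine List.mem_map.mpr ⟨_, List.getElem_mem hlt, ?_⟩
  rw [List.getElem_scanl, ← hm]
  simpa using congrArg SemidirectProduct.left (foldl_wmul_zip_take hlen.ge 1 (min m ks.length))

end SurjStrategy

theorem stmt5_general {G H Ω : Type*} [Group G] [Group H] [MulAction H Ω]
    [Fintype Ω] [Finite G]
    (p : ℕ) (hp : p.Prime) (hG : IsPGroup p G) (hH : IsPGroup p H) :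
    HasSurjStrat G H Ω := by
  have : Fact p.Prime := ⟨hp⟩
  obtain ⟨n, hn⟩ := IsPGroup.iff_card.mp hG
  have hK : IsPGroup p (Ω → G) :=
    .of_card (n := n * Nat.card Ω) (by rw [Nat.card_fun, hn, pow_mul])
  obtain ⟨ks, hks⟩ := SurjStrategy.exists_isCovering hH (Ω → G) hK mulAutArrow
  exact ⟨ks, hks.isSurjStrat⟩

/-- if G and H are finite p-groups for the same prime p and H acts
faithfully on Ω, then G ≀_Ω H has a surjective strategy. -/
theorem stmt5 {G H Ω : Type*} [Group G] [Group H] [MulAction H Ω]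
    [Fintype Ω] [Finite G] [Finite H] [FaithfulSMul H Ω]
    (p : ℕ) (hp : p.Prime) (hG : IsPGroup p G) (hH : IsPGroup p H) :
    HasSurjStrat G H Ω :=
  stmt5_general p hp hG hH
end
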